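/- Let V be a vector space over ℚ, B : V → V → ℚ a bilinear form, and let D ⊆ V be a set of vectors each satisfying B(δ,δ) = 0 for δ ∈ D. Let G be the subgroup of the group of linear automorphisms of V generated by the transvections τ_δ : v ↦ v + B(v,δ)·δ for δ ∈ D. Assume G acts irreducibly on V, i.e. the only subspaces W ⊆ V with g(W) ⊆ W for all g ∈ G are W = 0 and W = V. Then every subgroup H ≤ G of finite index also acts irreducibly on V: the only subspaces W ⊆ V with h(W) ⊆ W for all h ∈ H are W = 0 and W = V. -/
import Mathlib

lemma transvection_pow_apply
    {V : Type*} [AddCommGroup V] [Module ℚ V]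
    (B : V →ₗ[ℚ] V →ₗ[ℚ] ℚ) (δ : V) (hδ : B δ δ = 0)
    (e : V ≃ₗ[ℚ] V) (he : ∀ v, e v = v + B v δ • δ) (n : ℕ) (v : V) :
    (e ^ n) v = v + ((n : ℚ) * B v δ) • δ := by
  induction n with
  | zero => simp
  | succ n ih =>
    have hm : (e ^ (n+1)) v = e ((e ^ n) v) := by rw [pow_succ']; rfl
    rw [hm, ih, he]
    have : B (v + ((n : ℚ) * B v δ) • δ) δ = B v δ := by
      simp [hδ]
    rw [this]
    push_cast
    rw [add_mul, one_mul, add_smul, add_assoc]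

/-- If the group `G` generated by the transvections attached to a set `D` of
isotropic vectors acts irreducibly on `V`, then every finite-index subgroup
`H ≤ G` acts irreducibly on `V` as well. -/
theorem finite_index_subgroup_irreducible
    (V : Type*) [AddCommGroup V] [Module ℚ V]
    (B : V →ₗ[ℚ] V →ₗ[ℚ] ℚ) (D : Set V) (hD : ∀ δ ∈ D, B δ δ = 0)
    (G : Subgroup (V ≃ₗ[ℚ] V))
    (hG : G = Subgroup.closure {e : V ≃ₗ[ℚ] V | ∃ δ ∈ D, ∀ v, e v = v + B v δ • δ})
    (hirr : ∀ W : Submodule ℚ V, (∀ g ∈ G, ∀ w ∈ W, g w ∈ W) → W = ⊥ ∨ W = ⊤)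
    (H : Subgroup (V ≃ₗ[ℚ] V)) (hHG : H ≤ G)
    (hfin : (H.subgroupOf G).FiniteIndex) :
    ∀ W : Submodule ℚ V, (∀ h ∈ H, ∀ w ∈ W, h w ∈ W) → W = ⊥ ∨ W = ⊤ := by
  intro W hW
  apply hirr
  -- it suffices to show stability under every element of G
  suffices h : ∀ g ∈ G, (∀ w ∈ W, g w ∈ W) ∧ (∀ w ∈ W, g⁻¹ w ∈ W) by
    intro g hg w hw; exact (h g hg).1 w hw
  intro g hg
  rw [hG] at hg
  induction hg using Subgroup.closure_induction with
  | mem e he =>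
    obtain ⟨δ, hδD, heδ⟩ := he
    have hδ0 : B δ δ = 0 := hD δ hδD
    have heG : e ∈ G := by
      rw [hG]; exact Subgroup.subset_closure ⟨δ, hδD, heδ⟩
    obtain ⟨n, hn0, -, hnH⟩ := Subgroup.exists_pow_mem_of_index_ne_zero
      hfin.index_ne_zero (⟨e, heG⟩ : G)
    have hpowH : e ^ n ∈ H := by
      rwa [Subgroup.mem_subgroupOf, SubgroupClass.coe_pow] at hnH
    -- key: B w δ • δ ∈ W for w ∈ W
    have key : ∀ w ∈ W, B w δ • δ ∈ W := by
      intro w hw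
      have h1 : (e ^ n) w ∈ W := hW _ hpowH w hw
      rw [transvection_pow_apply B δ hδ0 e heδ n w] at h1
      have h2 : ((n : ℚ) * B w δ) • δ ∈ W := by
        have := W.sub_mem h1 hw; simpa using this
      have h3 := W.smul_mem ((n : ℚ)⁻¹) h2
      have hnne : (n : ℚ) ≠ 0 := Nat.cast_ne_zero.mpr hn0.ne'
      rwa [smul_smul, ← mul_assoc, inv_mul_cancel₀ hnne, one_mul] at h3
    constructor
    · intro w hw
      rw [heδ w]
      exact W.add_mem hw (key w hw)
    · intro w hw
      have hinv : e⁻¹ w = w - B w δ • δ := by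
        apply e.injective
        rw [show e (e⁻¹ w) = w from e.apply_symm_apply w, heδ]
        simp [hδ0, sub_add]
      rw [hinv]
      exact W.sub_mem hw (key w hw)
  | one => simp
  | mul a b _ _ iha ihb =>
    refine ⟨fun w hw => ?_, fun w hw => ?_⟩
    · exact iha.1 _ (ihb.1 w hw)
    · rw [mul_inv_rev]; exact ihb.2 _ (iha.2 w hw)
  | inv a _ iha =>
    exact ⟨fun w hw => iha.2 w hw, fun w hw => by rw [inv_inv]; exact iha.1 w hw⟩
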